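/- Let D be a positive integer and define the (D+1)×(D+1) real matrix P by P_{i,j} = (2j+1)·₄F₃[−i, i+1, −j, j+1; 1, D+2, −D; 1] for 0 ≤ i, j ≤ D. Then P² = (D+1)² I. -/

import Mathlib

/-- Pochhammer symbol `(a)_n = a(a+1)⋯(a+n-1)`. -/
noncomputable def poch (a : ℝ) (n : ℕ) : ℝ := ∏ k ∈ Finset.range n, (a + k)

/-- The terminating hypergeometric sum
`₄F₃[−i, i+1, −j, j+1; 1, D+2, −D; 1] = Σ_{n=0}^{min(i,j)} …`. -/
noncomputable def F4 (D i j : ℕ) : ℝ :=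
  ∑ n ∈ Finset.range (min i j + 1),
    (poch (-(i : ℝ)) n * poch ((i : ℝ) + 1) n * poch (-(j : ℝ)) n * poch ((j : ℝ) + 1) n) /
      (poch 1 n * poch ((D : ℝ) + 2) n * poch (-(D : ℝ)) n * (n.factorial : ℝ))

/-- The matrix `P` with entries `P_{i,j} = (2j+1)·₄F₃[−i,i+1,−j,j+1;1,D+2,−D;1]`. -/
noncomputable def Pmat (D : ℕ) : Matrix (Fin (D + 1)) (Fin (D + 1)) ℝ :=
  fun i j => (2 * ((j : ℕ) : ℝ) + 1) * F4 D (i : ℕ) (j : ℕ)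

/-!
Each summand of the ₄F₃ series factors through the coefficients
`ℓ i n = (-1)ⁿ C(i, n) C(i + n, n)` of the shifted Legendre polynomials `Lᵢ`, so
`P = V A Vᵀ Λ` with `V = (ℓ i n)`, `Λ = diag (2j + 1)` and `A` diagonal.
Since `(-1)ⁿ n!² ℓ j n = (j - n + 1)(j - n + 2)⋯(j + n)` is a polynomial in `j`, the sums
`∑_{j ≤ D} (2j + 1) ℓ j n ℓ j m` telescope: `Vᵀ Λ V = C H C` with `H` the Hilbert matrix
`1 / (n + m + 1)` and `C` diagonal, and `A C = (D + 1) I`. Hence `P² = (D + 1)² V H Vᵀ Λ`,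
and `V H Vᵀ = (∫₀¹ Lᵢ Lₖ)ᵢₖ = diag (1 / (2i + 1))` is the orthogonality of the shifted
Legendre polynomials, which follows from Rodrigues' formula by integrating by parts.
-/

open Polynomial Finset Matrix
open scoped Nat

lemma neg_one_pow_sq {R : Type*} [Monoid R] [HasDistribNeg R] (n : ℕ) : ((-1 : R) ^ n) ^ 2 = 1 := by
  rw [← pow_mul, pow_mul', neg_one_sq, one_pow]

lemma poch_eq_eval (a : ℝ) (n : ℕ) : poch a n = (ascPochhammer ℝ n).eval a := by
  induction n with
  | zero => simp [poch]
  | succ n ih => rw [poch, prod_range_succ, ← poch, ih, ascPochhammer_succ_eval]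

lemma poch_succ (a : ℝ) (n : ℕ) : poch a (n + 1) = poch a n * (a + n) :=
  prod_range_succ _ n

lemma poch_succ' (a : ℝ) (n : ℕ) : poch a (n + 1) = a * poch (a + 1) n := by
  simp [poch_eq_eval, ascPochhammer_succ_left]

lemma poch_add (a : ℝ) (m n : ℕ) : poch a (m + n) = poch a m * poch (a + m) n := by
  simp [poch_eq_eval, ← ascPochhammer_mul]

lemma poch_neg (x : ℝ) (n : ℕ) : poch (-x) n = (-1) ^ n * poch (x - n + 1) n := by
  rw [poch_eq_eval, ascPochhammer_eval_neg_eq_descPochhammer, descPochhammer_eval_eq_ascPochhammer,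
    poch_eq_eval]

lemma poch_one (n : ℕ) : poch 1 n = n ! := by
  rw [poch_eq_eval, ascPochhammer_eval_one]

lemma poch_pos {a : ℝ} (ha : 0 < a) (n : ℕ) : 0 < poch a n := by
  rw [poch_eq_eval]
  exact ascPochhammer_pos n a ha

lemma poch_neg_natCast (i n : ℕ) : poch (-i) n = (-1) ^ n * (n ! * i.choose n) := by
  rw [poch_eq_eval, ascPochhammer_eval_neg_eq_descPochhammer, descPochhammer_eval_eq_descFactorial,
    Nat.descFactorial_eq_factorial_mul_choose]
  push_cast
  ring

lemma poch_natCast_add_one (i n : ℕ) : poch (i + 1) n = n ! * (i + n).choose n := by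
  rw [poch_eq_eval, ← Nat.cast_succ, ← Nat.cast_ascFactorial,
    Nat.ascFactorial_eq_factorial_mul_choose]
  push_cast
  ring

noncomputable def centralRising (n : ℕ) (x : ℝ) : ℝ := poch (x - n + 1) (2 * n)

lemma centralRising_eq_neg_one_pow_mul (n : ℕ) (x : ℝ) :
    centralRising n x = (-1) ^ n * (poch (-x) n * poch (x + 1) n) := by
  rw [centralRising, two_mul, poch_add, poch_neg, show x - n + 1 + n = x + 1 by ring]
  linear_combination (-(poch (x - n + 1) n * poch (x + 1) n)) * neg_one_pow_sq (R := ℝ) n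

lemma poch_sub_eq_mul_centralRising (n : ℕ) (x : ℝ) :
    poch (x - n) (2 * n + 1) = (x - n) * centralRising n x := by
  rw [poch_succ', centralRising]

lemma poch_add_one_sub_eq_centralRising_mul (n : ℕ) (x : ℝ) :
    poch (x + 1 - n) (2 * n + 1) = centralRising n x * (x + n + 1) := by
  rw [poch_succ, centralRising, add_sub_right_comm]
  push_cast
  ring_nf

-- The two lemmas above reduce the step `N → N + 1` to
-- `(N + n + 1)(N + m + 1) - (N - n)(N - m) = (n + m + 1)(2N + 1)`.
lemma mul_sum_centralRising_mul_centralRising (n m N : ℕ) :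
    ((n : ℝ) + m + 1) *
        ∑ j ∈ range N, (2 * (j : ℝ) + 1) * (centralRising n j * centralRising m j) =
      poch (N - n) (2 * n + 1) * poch (N - m) (2 * m + 1) := by
  induction N with
  | zero =>
    rw [sum_range_zero, mul_zero, eq_comm, mul_eq_zero]
    exact Or.inl (prod_eq_zero (mem_range.2 (by omega : n < 2 * n + 1)) (by push_cast; ring))
  | succ N ih =>
    rw [sum_range_succ, mul_add, ih, Nat.cast_succ, poch_add_one_sub_eq_centralRising_mul,
      poch_add_one_sub_eq_centralRising_mul, poch_sub_eq_mul_centralRising,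
      poch_sub_eq_mul_centralRising]
    ring

noncomputable def unitIntegral : ℝ[X] →ₗ[ℝ] ℝ where
  toFun p := ∫ x in (0 : ℝ)..1, p.eval x
  map_add' p q := by
    simp only [eval_add]
    exact intervalIntegral.integral_add (p.continuous.intervalIntegrable _ _)
      (q.continuous.intervalIntegrable _ _)
  map_smul' c p := by
    simp only [eval_smul, smul_eq_mul, RingHom.id_apply]
    exact intervalIntegral.integral_const_mul c _

lemma unitIntegral_apply (p : ℝ[X]) : unitIntegral p = ∫ x in (0 : ℝ)..1, p.eval x := rfl

lemma unitIntegral_derivative (p : ℝ[X]) :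
    unitIntegral (derivative p) = p.eval 1 - p.eval 0 :=
  intervalIntegral.integral_eq_sub_of_hasDerivAt (fun x _ => p.hasDerivAt x)
    ((derivative p).continuous.intervalIntegrable _ _)

lemma unitIntegral_X_pow (n : ℕ) : unitIntegral (X ^ n) = 1 / (n + 1) := by
  simp [unitIntegral_apply, integral_pow]

lemma unitIntegral_mul_derivative (p q : ℝ[X]) :
    unitIntegral (p * derivative q) =
      (p * q).eval 1 - (p * q).eval 0 - unitIntegral (derivative p * q) := by
  rw [← unitIntegral_derivative, derivative_mul, map_add]
  ring

lemma unitIntegral_mul_iterate_derivative {u : ℝ[X]} {k : ℕ}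
    (hu : ∀ j < k, (derivative^[j] u).eval 0 = 0 ∧ (derivative^[j] u).eval 1 = 0) (p : ℝ[X]) :
    unitIntegral (p * derivative^[k] u) = (-1) ^ k * unitIntegral (derivative^[k] p * u) := by
  induction k generalizing p with
  | zero => simp
  | succ k ih =>
    rw [Function.iterate_succ_apply', unitIntegral_mul_derivative,
      ih (fun j hj => hu j (by omega)), ← Function.iterate_succ_apply]
    simp [(hu k (by omega)).1, (hu k (by omega)).2, pow_succ]

lemma unitIntegral_C_mul (c : ℝ) (p : ℝ[X]) : unitIntegral (C c * p) = c * unitIntegral p := by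
  rw [← smul_eq_C_mul, map_smul, smul_eq_mul]

lemma unitIntegral_X_pow_mul_one_sub_X_pow (a b : ℕ) :
    unitIntegral (X ^ a * (1 - X) ^ b) = (a ! * b ! : ℝ) / (a + b + 1)! := by
  induction b generalizing a with
  | zero =>
    rw [pow_zero, mul_one, unitIntegral_X_pow, Nat.factorial_succ, Nat.factorial_zero]
    push_cast
    field_simp
  | succ b ih =>
    have parts := unitIntegral_mul_derivative ((1 - X) ^ (b + 1)) (X ^ (a + 1))
    have hl : (1 - X) ^ (b + 1) * derivative (X ^ (a + 1) : ℝ[X]) =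
        C ((a : ℝ) + 1) * (X ^ a * (1 - X) ^ (b + 1)) := by
      simp only [derivative_X_pow_succ, map_add, map_natCast, map_one]
      ring
    have hr : derivative ((1 - X) ^ (b + 1) : ℝ[X]) * X ^ (a + 1) =
        C (-((b : ℝ) + 1)) * (X ^ (a + 1) * (1 - X) ^ b) := by
      simp only [derivative_pow, derivative_sub, derivative_one, derivative_X, map_add, map_neg,
        map_natCast, map_one, add_tsub_cancel_right]
      push_cast
      ring
    rw [hl, hr, unitIntegral_C_mul, unitIntegral_C_mul, ih (a + 1)] at parts
    simp only [eval_mul, eval_pow, eval_sub, eval_one, eval_X, sub_self, zero_pow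
      (Nat.succ_ne_zero _), zero_mul, mul_zero, sub_zero, zero_sub] at parts
    rw [show a + 1 + b + 1 = a + (b + 1) + 1 by ring, Nat.factorial_succ a] at parts
    rw [Nat.factorial_succ b]
    push_cast at parts ⊢
    field_simp at parts ⊢
    linear_combination parts

noncomputable def realShiftedLegendre (k : ℕ) : ℝ[X] :=
  (shiftedLegendre k).map (Int.castRingHom ℝ)

lemma coeff_realShiftedLegendre (k n : ℕ) :
    (realShiftedLegendre k).coeff n = (-1) ^ n * k.choose n * (k + n).choose k := by
  simp [realShiftedLegendre, coeff_shiftedLegendre]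

lemma natDegree_realShiftedLegendre (k : ℕ) : (realShiftedLegendre k).natDegree = k := by
  rw [realShiftedLegendre, natDegree_map_eq_of_injective (RingHom.injective_int _),
    natDegree_shiftedLegendre]

lemma factorial_mul_realShiftedLegendre (k : ℕ) :
    C (k ! : ℝ) * realShiftedLegendre k = derivative^[k] (X ^ k * (1 - X) ^ k) := by
  have := congrArg (map (Int.castRingHom ℝ)) (factorial_mul_shiftedLegendre_eq k)
  rw [← iterate_derivative_map] at this
  simpa [realShiftedLegendre] using this

lemma eval_iterate_derivative_X_pow_mul_one_sub_X_pow {j k : ℕ} (hj : j < k) :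
    (derivative^[j] (X ^ k * (1 - X) ^ k : ℝ[X])).eval 0 = 0 ∧
      (derivative^[j] (X ^ k * (1 - X) ^ k : ℝ[X])).eval 1 = 0 := by
  obtain ⟨r, hr⟩ := pow_sub_dvd_iterate_derivative_of_pow_dvd j
    (dvd_mul_right (X ^ k) ((1 - X) ^ k : ℝ[X]))
  obtain ⟨s, hs⟩ := pow_sub_dvd_iterate_derivative_of_pow_dvd j
    (dvd_mul_left ((1 - X) ^ k) (X ^ k : ℝ[X]))
  have hkj : k - j ≠ 0 := by omega
  exact ⟨by simp [hr, hkj], by simp [hs, hkj]⟩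

lemma unitIntegral_mul_realShiftedLegendre_of_natDegree_lt {p : ℝ[X]} {k : ℕ}
    (hp : p.natDegree < k) : unitIntegral (p * realShiftedLegendre k) = 0 := by
  have hk : (k ! : ℝ) ≠ 0 := by positivity
  apply mul_left_cancel₀ hk
  rw [mul_zero, ← unitIntegral_C_mul, mul_left_comm, factorial_mul_realShiftedLegendre,
    unitIntegral_mul_iterate_derivative
      (fun _ hj => eval_iterate_derivative_X_pow_mul_one_sub_X_pow hj),
    iterate_derivative_eq_zero hp, zero_mul, map_zero, mul_zero]

lemma iterate_derivative_realShiftedLegendre_self (k : ℕ) :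
    derivative^[k] (realShiftedLegendre k) = C ((-1) ^ k * k ! * (2 * k).choose k : ℝ) := by
  have hdeg : (derivative^[k] (realShiftedLegendre k)).natDegree ≤ 0 :=
    (natDegree_iterate_derivative _ k).trans (by rw [natDegree_realShiftedLegendre, Nat.sub_self])
  rw [eq_C_of_natDegree_le_zero hdeg, coeff_iterate_derivative, zero_add, Nat.descFactorial_self,
    coeff_realShiftedLegendre, Nat.choose_self, two_mul, nsmul_eq_mul]
  congr 1
  push_cast
  ring

lemma unitIntegral_realShiftedLegendre_mul_self (k : ℕ) :
    unitIntegral (realShiftedLegendre k * realShiftedLegendre k) = 1 / (2 * k + 1) := by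
  have hk : (k ! : ℝ) ≠ 0 := by positivity
  apply mul_left_cancel₀ hk
  rw [← unitIntegral_C_mul, mul_left_comm, factorial_mul_realShiftedLegendre,
    unitIntegral_mul_iterate_derivative
      (fun _ hj => eval_iterate_derivative_X_pow_mul_one_sub_X_pow hj),
    iterate_derivative_realShiftedLegendre_self, unitIntegral_C_mul,
    unitIntegral_X_pow_mul_one_sub_X_pow]
  have hbinom : ((k + k).choose k * k ! * k ! : ℝ) = (k + k)! := by
    exact_mod_cast Nat.add_choose_mul_factorial_mul_factorial k k
  rw [two_mul, Nat.factorial_succ]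
  push_cast
  rw [← hbinom]
  have hchoose : ((k + k).choose k : ℝ) ≠ 0 :=
    Nat.cast_ne_zero.2 (Nat.choose_pos (by omega)).ne'
  field_simp
  linear_combination (k + k + 1 : ℝ) * neg_one_pow_sq (R := ℝ) k

lemma unitIntegral_realShiftedLegendre_mul (i k : ℕ) :
    unitIntegral (realShiftedLegendre i * realShiftedLegendre k) =
      if i = k then (1 / (2 * i + 1) : ℝ) else 0 := by
  rcases lt_trichotomy i k with h | rfl | h
  · rw [if_neg h.ne, unitIntegral_mul_realShiftedLegendre_of_natDegree_lt
      (by rwa [natDegree_realShiftedLegendre])]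
  · rw [if_pos rfl, unitIntegral_realShiftedLegendre_mul_self]
  · rw [if_neg h.ne', mul_comm, unitIntegral_mul_realShiftedLegendre_of_natDegree_lt
      (by rwa [natDegree_realShiftedLegendre])]

lemma unitIntegral_mul_eq_sum {p q : ℝ[X]} {N : ℕ} (hp : p.natDegree < N)
    (hq : q.natDegree < N) :
    unitIntegral (p * q) =
      ∑ n ∈ range N, ∑ m ∈ range N, p.coeff n * q.coeff m / (n + m + 1) := by
  conv_lhs => rw [p.as_sum_range' N hp, q.as_sum_range' N hq, sum_mul_sum, map_sum]
  refine sum_congr rfl fun n _ => ?_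
  rw [map_sum]
  refine sum_congr rfl fun m _ => ?_
  rw [← C_mul_X_pow_eq_monomial, ← C_mul_X_pow_eq_monomial, mul_mul_mul_comm, ← C_mul,
    ← pow_add, unitIntegral_C_mul, unitIntegral_X_pow]
  push_cast
  ring

lemma poch_neg_natCast_mul_poch_natCast_add_one (i n : ℕ) :
    poch (-i) n * poch (i + 1) n = n ! ^ 2 * (realShiftedLegendre i).coeff n := by
  rw [poch_neg_natCast, poch_natCast_add_one, coeff_realShiftedLegendre, Nat.choose_symm_add]
  ring

lemma coeff_realShiftedLegendre_eq_centralRising (j n : ℕ) :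
    (realShiftedLegendre j).coeff n = (-1) ^ n * centralRising n j / n ! ^ 2 := by
  rw [centralRising_eq_neg_one_pow_mul, poch_neg_natCast_mul_poch_natCast_add_one]
  field_simp
  linear_combination (-(realShiftedLegendre j).coeff n) * neg_one_pow_sq (R := ℝ) n

noncomputable def legendreCoeffMatrix (N : ℕ) : Matrix (Fin N) (Fin N) ℝ :=
  Matrix.of fun i n => (realShiftedLegendre i).coeff n

noncomputable def hilbertMatrix (N : ℕ) : Matrix (Fin N) (Fin N) ℝ :=
  Matrix.of fun n m => 1 / ((n : ℝ) + m + 1)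

lemma legendreCoeffMatrix_mul_hilbertMatrix_mul_transpose (N : ℕ) :
    legendreCoeffMatrix N * hilbertMatrix N * (legendreCoeffMatrix N)ᵀ =
    diagonal fun i : Fin N => 1 / (2 * ((i : ℕ) : ℝ) + 1) := by
  ext i k
  have hi : (realShiftedLegendre i).natDegree < N := by
    rw [natDegree_realShiftedLegendre]; exact i.2
  have hk : (realShiftedLegendre k).natDegree < N := by
    rw [natDegree_realShiftedLegendre]; exact k.2
  have hgram := unitIntegral_mul_eq_sum hi hk
  rw [unitIntegral_realShiftedLegendre_mul] at hgram
  simp only [legendreCoeffMatrix, hilbertMatrix, mul_apply, of_apply, transpose_apply,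
    diagonal_apply, Fin.ext_iff]
  rw [hgram, sum_range, sum_comm]
  simp only [sum_range, sum_mul]
  refine sum_congr rfl fun n _ => sum_congr rfl fun m _ => ?_
  ring

-- Equals `n!⁴ / ((1)ₙ (D + 2)ₙ (-D)ₙ n!)`; the `n!⁴` comes from the numerator of the series.
noncomputable def hypergeomWeight (D n : ℕ) : ℝ :=
  (-1) ^ n * n ! ^ 2 / (poch (D + 2) n * poch (D - n + 1) n)

noncomputable def boundaryWeight (N n : ℕ) : ℝ := (-1) ^ n * poch (N - n) (2 * n + 1) / n ! ^ 2

lemma F4_summand_eq (D i j n : ℕ) :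
    (poch (-(i : ℝ)) n * poch ((i : ℝ) + 1) n * poch (-(j : ℝ)) n * poch ((j : ℝ) + 1) n) /
      (poch 1 n * poch ((D : ℝ) + 2) n * poch (-(D : ℝ)) n * (n.factorial : ℝ)) =
    hypergeomWeight D n * (realShiftedLegendre i).coeff n * (realShiftedLegendre j).coeff n := by
  rw [mul_assoc (poch _ n * _), poch_neg_natCast_mul_poch_natCast_add_one,
    poch_neg_natCast_mul_poch_natCast_add_one, poch_one, poch_neg, hypergeomWeight]
  field_simp
  rw [neg_one_pow_sq, mul_one]

lemma F4_eq_sum {D i j : ℕ} (hi : i ≤ D) (hj : j ≤ D) :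
    F4 D i j = ∑ n ∈ range (D + 1),
      hypergeomWeight D n * (realShiftedLegendre i).coeff n * (realShiftedLegendre j).coeff n := by
  simp only [F4, F4_summand_eq]
  refine sum_subset (range_subset_range.2 (by omega)) fun n _ hn => ?_
  rcases Nat.lt_or_ge i n with h | h
  · rw [coeff_eq_zero_of_natDegree_lt (by rwa [natDegree_realShiftedLegendre]), mul_zero, zero_mul]
  · rw [coeff_eq_zero_of_natDegree_lt (p := realShiftedLegendre j)
      (by rw [natDegree_realShiftedLegendre]; rw [mem_range, not_lt] at hn; omega), mul_zero]

lemma hypergeomWeight_mul_boundaryWeight {D n : ℕ} (hn : n ≤ D) :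
    hypergeomWeight D n * boundaryWeight (D + 1) n = D + 1 := by
  have hP : poch ((D : ℝ) + 2) n ≠ 0 := (poch_pos (by positivity) n).ne'
  have hQ : poch ((D : ℝ) - n + 1) n ≠ 0 :=
    (poch_pos (by linarith [(Nat.cast_le.2 hn : (n : ℝ) ≤ D)]) n).ne'
  have hfac : (n ! : ℝ) ≠ 0 := by positivity
  have hsplit : poch ((D + 1 : ℕ) - n) (2 * n + 1) =
      poch ((D : ℝ) - n + 1) n * ((D + 1) * poch ((D : ℝ) + 2) n) := by
    rw [show 2 * n + 1 = n + (n + 1) by ring, poch_add, poch_succ']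
    push_cast
    ring_nf
  rw [hypergeomWeight, boundaryWeight, hsplit]
  field_simp
  linear_combination neg_one_pow_sq (R := ℝ) n

lemma sum_coeff_realShiftedLegendre_mul_coeff (n m N : ℕ) :
    ∑ j ∈ range N,
        (realShiftedLegendre j).coeff n * (2 * (j : ℝ) + 1) * (realShiftedLegendre j).coeff m =
      boundaryWeight N n * (1 / (n + m + 1)) * boundaryWeight N m := by
  have hfac : ((n ! : ℝ) ^ 2 * m ! ^ 2) ≠ 0 := by positivity
  have hcoeff : ∑ j ∈ range N,
        (realShiftedLegendre j).coeff n * (2 * (j : ℝ) + 1) * (realShiftedLegendre j).coeff m =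
      (-1) ^ (n + m) / (n ! ^ 2 * m ! ^ 2) *
        ∑ j ∈ range N, (2 * (j : ℝ) + 1) * (centralRising n j * centralRising m j) := by
    rw [mul_sum]
    refine sum_congr rfl fun j _ => ?_
    rw [coeff_realShiftedLegendre_eq_centralRising, coeff_realShiftedLegendre_eq_centralRising]
    field_simp
    ring
  have htel := mul_sum_centralRising_mul_centralRising n m N
  rw [mul_comm, ← eq_div_iff (by positivity)] at htel
  rw [hcoeff, htel, boundaryWeight, boundaryWeight]
  ring

lemma transpose_legendreCoeffMatrix_mul_diagonal_mul (N : ℕ) :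
    (legendreCoeffMatrix N)ᵀ * diagonal (fun j : Fin N => 2 * (j : ℝ) + 1) *
        legendreCoeffMatrix N =
      diagonal (fun n : Fin N => boundaryWeight N n) * hilbertMatrix N *
        diagonal (fun n : Fin N => boundaryWeight N n) := by
  ext n m
  rw [mul_apply, mul_diagonal, diagonal_mul]
  simp only [legendreCoeffMatrix, hilbertMatrix, mul_diagonal, transpose_apply, of_apply]
  rw [Fin.sum_univ_eq_sum_range (fun j => (realShiftedLegendre j).coeff n * (2 * (j : ℝ) + 1) *
    (realShiftedLegendre j).coeff m), sum_coeff_realShiftedLegendre_mul_coeff]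

lemma Pmat_eq_factorization (D : ℕ) :
    Pmat D = legendreCoeffMatrix (D + 1) *
      diagonal (fun n : Fin (D + 1) => hypergeomWeight D n) * (legendreCoeffMatrix (D + 1))ᵀ *
      diagonal (fun j : Fin (D + 1) => 2 * (j : ℝ) + 1) := by
  ext i j
  rw [mul_diagonal, mul_apply, Pmat, F4_eq_sum (Fin.is_le i) (Fin.is_le j), mul_comm,
    ← Fin.sum_univ_eq_sum_range]
  simp only [legendreCoeffMatrix, mul_diagonal, transpose_apply, of_apply]
  refine congrArg₂ _ (sum_congr rfl fun n _ => by ring) rfl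

lemma Matrix.mul_self_eq_of_factorization {ι R : Type*} [Fintype ι] [DecidableEq ι] [CommRing R]
    {P V A C H Λ : Matrix ι ι R} {c : R} (hP : P = V * A * Vᵀ * Λ)
    (hV : Vᵀ * Λ * V = C * H * C) (hAC : A * C = c • 1) (hCA : C * A = c • 1) :
    P * P = c ^ 2 • (V * H * Vᵀ * Λ) := calc
  P * P = V * A * (Vᵀ * Λ * V) * A * Vᵀ * Λ := by simp only [hP, Matrix.mul_assoc]
  _ = V * (A * C) * H * (C * A) * Vᵀ * Λ := by simp only [hV, Matrix.mul_assoc]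
  _ = c ^ 2 • (V * H * Vᵀ * Λ) := by
    simp only [hAC, hCA, Matrix.mul_smul, Matrix.smul_mul, Matrix.mul_one, smul_smul, pow_two]

theorem P_sq_general (D : ℕ) :
    Pmat D * Pmat D = (((D : ℝ) + 1) ^ 2) • (1 : Matrix (Fin (D + 1)) (Fin (D + 1)) ℝ) := by
  have hAC : diagonal (fun n : Fin (D + 1) => hypergeomWeight D n) *
      diagonal (fun n : Fin (D + 1) => boundaryWeight (D + 1) n) = ((D : ℝ) + 1) • 1 := by
    rw [diagonal_mul_diagonal, smul_one_eq_diagonal]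
    exact congrArg diagonal (funext fun n => hypergeomWeight_mul_boundaryWeight (Fin.is_le n))
  rw [mul_self_eq_of_factorization (Pmat_eq_factorization D)
      (transpose_legendreCoeffMatrix_mul_diagonal_mul _) hAC ((commute_diagonal _ _).eq.trans hAC),
    legendreCoeffMatrix_mul_hilbertMatrix_mul_transpose, diagonal_mul_diagonal, ← diagonal_one]
  congr 2
  funext j
  field_simp

theorem P_sq (D : ℕ) (hD : 0 < D) :
    Pmat D * Pmat D = (((D : ℝ) + 1) ^ 2) • (1 : Matrix (Fin (D + 1)) (Fin (D + 1)) ℝ) :=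
  P_sq_general D
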